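/- For every integer m ≥ 1 and every real g with 0 < g < 1/4, the product Y_m(g) = ∏_{k=1}^m X_k(g) equals g^{m/2} / U_m(1/(2√g)), where g^{m/2} = (√g)^m and U_m is the m-th Chebyshev polynomial of the second kind (whose value at 1/(2√g) is nonzero for 0 < g < 1/4). -/

import Mathlib

/-!
Put `s = √g` and `x = 1 / (2s)`, so `x ≥ 1`. Multiplying the Chebyshev recurrence
`U_{n+2}(x) = 2x U_{n+1}(x) - U_n(x)` by `s` gives `s U_{n+2} = U_{n+1} - s U_n`, which is exactly
the statement that `X_{n+1}(s²) = s U_n(x) / U_{n+1}(x)` obeys `X_{n+2} = s² / (1 - X_{n+1})`.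
The product `Y_m` then telescopes to `s^m / U_m(x)`. For `x ≥ 1` the sequence `U_n(x)` is
nondecreasing from `U_0 = 1`, so no denominator vanishes.
-/

open scoped Real BigOperators

/-- The generating functions `X_m` of rooted planar trees of height at most `m`:
`X_0 = 0`, `X_1(g) = g`, `X_m(g) = g/(1 - X_{m-1}(g))`. -/
noncomputable def Xc : ℕ → ℂ → ℂ
  | 0, _ => 0
  | (m + 1), g => g / (1 - Xc m g)

/-- `Y_m(g) = ∏_{k=1}^m X_k(g)`, the generating function of one-sided trees of height `m`. -/
noncomputable def Yc (m : ℕ) (g : ℂ) : ℂ := ∏ k ∈ Finset.Icc 1 m, Xc k g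

open Polynomial Polynomial.Chebyshev

namespace Polynomial.Chebyshev

variable {R : Type*} [CommRing R]

theorem eval_U_add_two (x : R) (n : ℤ) :
    (U R (n + 2)).eval x = 2 * x * (U R (n + 1)).eval x - (U R n).eval x := by
  simp only [U_add_two, eval_sub, eval_mul, eval_ofNat, eval_X]

theorem mul_eval_U_add_two {x s : R} (hxs : 2 * x * s = 1) (n : ℤ) :
    s * (U R (n + 2)).eval x = (U R (n + 1)).eval x - s * (U R n).eval x := by
  rw [eval_U_add_two]
  linear_combination (U R (n + 1)).eval x * hxs

theorem one_le_eval_U_and_eval_U_le_succ [LinearOrder R] [IsStrictOrderedRing R] {x : R}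
    (hx : 1 ≤ x) (n : ℕ) : 1 ≤ (U R n).eval x ∧ (U R n).eval x ≤ (U R (n + 1)).eval x := by
  induction n with
  | zero =>
    simp only [Nat.cast_zero, zero_add, U_zero, U_one, eval_one, eval_mul, eval_ofNat, eval_X]
    constructor <;> linarith
  | succ n ih =>
    obtain ⟨hone, hmono⟩ := ih
    rw [Nat.cast_succ, add_assoc, one_add_one_eq_two, eval_U_add_two]
    exact ⟨hone.trans hmono, by nlinarith⟩

theorem one_le_eval_U [LinearOrder R] [IsStrictOrderedRing R] {x : R} (hx : 1 ≤ x) (n : ℕ) :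
    1 ≤ (U R n).eval x :=
  (one_le_eval_U_and_eval_U_le_succ hx n).1

end Polynomial.Chebyshev

section

variable {s x : ℂ}

theorem Xc_succ_sq_eq_mul_eval_U_div (hxs : 2 * x * s = 1) (m : ℕ)
    (hU : ∀ k ≤ m, (U ℂ k).eval x ≠ 0) :
    Xc (m + 1) (s ^ 2) = s * (U ℂ m).eval x / (U ℂ (m + 1)).eval x := by
  have hs : s ≠ 0 := right_ne_zero_of_mul_eq_one hxs
  have hx : 2 * x ≠ 0 := left_ne_zero_of_mul_eq_one hxs
  induction m with
  | zero =>
    simp only [Xc, sub_zero, div_one, Nat.cast_zero, zero_add, U_zero, U_one, eval_one, eval_mul,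
      eval_ofNat, eval_X]
    rw [eq_div_iff hx]
    linear_combination s * hxs
  | succ m ih =>
    set a := (U ℂ m).eval x
    set b := (U ℂ (m + 1)).eval x
    set c := (U ℂ (m + 2)).eval x
    have hb : b ≠ 0 := by exact_mod_cast hU (m + 1) le_rfl
    have hdenom : 1 - s * a / b = s * c / b := by
      rw [mul_eval_U_add_two hxs]
      field_simp
      ring
    rw [Xc, ih fun k hk => hU k (Nat.le_succ_of_le hk), Nat.cast_succ, add_assoc,
      one_add_one_eq_two, hdenom, div_div_eq_mul_div, sq, mul_assoc, mul_div_mul_left _ _ hs]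

theorem Yc_zero (g : ℂ) : Yc 0 g = 1 := by simp [Yc]

theorem Yc_succ (m : ℕ) (g : ℂ) : Yc (m + 1) g = Yc m g * Xc (m + 1) g :=
  Finset.prod_Icc_succ_top (Nat.le_add_left 1 m) _

theorem Yc_sq_eq_pow_div_eval_U (hxs : 2 * x * s = 1) (m : ℕ)
    (hU : ∀ k < m, (U ℂ k).eval x ≠ 0) :
    Yc m (s ^ 2) = s ^ m / (U ℂ m).eval x := by
  induction m with
  | zero => simp [Yc_zero]
  | succ m ih =>
    have hm : (U ℂ m).eval x ≠ 0 := hU m m.lt_succ_self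
    rw [Yc_succ, ih fun k hk => hU k (Nat.lt_succ_of_lt hk),
      Xc_succ_sq_eq_mul_eval_U_div hxs m fun k hk => hU k (Nat.lt_succ_of_le hk), pow_succ,
      Nat.cast_succ]
    field_simp

end

theorem Yc_eq_chebyshevU (m : ℕ) (g : ℝ) (hg0 : 0 < g) (hg : g < 1 / 4) :
    Polynomial.eval (1 / (2 * Real.sqrt g)) (Polynomial.Chebyshev.U ℝ (m : ℤ)) ≠ 0 ∧
      Yc m (g : ℂ) =
        (((Real.sqrt g) ^ m /
            Polynomial.eval (1 / (2 * Real.sqrt g)) (Polynomial.Chebyshev.U ℝ (m : ℤ)) : ℝ) : ℂ) := by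
  have hsqrt : 0 < √g := Real.sqrt_pos.2 hg0
  have hx : 1 ≤ 1 / (2 * √g) := by
    rw [le_div_iff₀ (by positivity)]
    nlinarith [Real.sq_sqrt hg0.le]
  have hU (k : ℕ) : (U ℝ k).eval (1 / (2 * √g)) ≠ 0 :=
    (one_pos.trans_le (one_le_eval_U hx k)).ne'
  refine ⟨hU m, ?_⟩
  have hxs : 2 * ((1 / (2 * √g) : ℝ) : ℂ) * (√g : ℂ) = 1 := by
    exact_mod_cast (show 2 * (1 / (2 * √g)) * √g = 1 by field_simp)
  have hg_sq : (g : ℂ) = (√g : ℂ) ^ 2 := by exact_mod_cast (Real.sq_sqrt hg0.le).symm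
  rw [Complex.ofReal_div, Complex.ofReal_pow, complex_ofReal_eval_U, hg_sq,
    Yc_sq_eq_pow_div_eval_U hxs m fun k _ => by exact_mod_cast hU k]
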